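/- (Eventual suboptimality of increasing the limit when the mean is finite.) Let Y > 0 be a random variable with a continuous density on (0, ∞) and survival function S_Y(t) = l(t)·t^{−1/γ}, where γ ∈ (0, 1) and l is slowly varying, so that π⁺ := E[Y] < ∞. Let L : ℝ → ℝ be continuously differentiable, nondecreasing, with L and L′ bounded and L′ continuous, and let f : ℝ → ℝ be continuously differentiable and nondecreasing with f′ continuous. Define π(s) = ∫₀^s S_Y(t) dt and 𝔏(s) = E[L(min(Y, s)/Y − f(π(s)))]. If f′(π⁺) > 0 and L′(1 − f(π⁺)) > 0, then there exists s₀ > 0 such that 𝔏 is strictly decreasing on [s₀, ∞). -/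

import Mathlib

open MeasureTheory Set Filter

/-- Survival function `S_Y(t) = P(Y > t)` of a random variable `Y`. -/
noncomputable def survival {Ω : Type*} [MeasurableSpace Ω] (μ : Measure Ω)
    (Y : Ω → ℝ) (t : ℝ) : ℝ :=
  (μ {ω | t < Y ω}).toReal

/-- Pure premium `π(s) = ∫₀^s S_Y(t) dt = E[min(Y, s)]` of the capped contract. -/
noncomputable def cappedPremium {Ω : Type*} [MeasurableSpace Ω] (μ : Measure Ω)
    (Y : Ω → ℝ) (s : ℝ) : ℝ :=
  ∫ t in Ioc (0:ℝ) s, survival μ Y t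

/-- Objective `𝔏(s) = E[L(min(Y, s)/Y − f(π(s)))]` of the capped contract. -/
noncomputable def cappedObjective {Ω : Type*} [MeasurableSpace Ω] (μ : Measure Ω)
    (Y : Ω → ℝ) (L f : ℝ → ℝ) (s : ℝ) : ℝ :=
  ∫ ω, L (min (Y ω) s / Y ω - f (cappedPremium μ Y s)) ∂μ

open Topology Asymptotics

/-! On `{Y ≤ s₁}` raising the limit from `s₁` to `s₂` changes nothing but the premium, which lowers
`L` by at least about `L'(1 - f π⁺) f'(π⁺) (π(s₂) - π(s₁))`. On `{Y > s₁}` the extra indemnity ratio is at most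
`(min(Y, s₂) - s₁) / s₁`, whose expectation is `(π(s₂) - π(s₁)) / s₁`, so with `L` Lipschitz the
gain is `O((π(s₂) - π(s₁)) / s₁)` and the cost wins once `s₁` is large. Regular variation enters
only through a Potter-type bound `S_Y(t) = O(t^{-β})` with `1 < β < 1/γ`, which makes `E[Y]`
finite and `π(s) → E[Y]`. -/

lemma le_of_map_two_mul_le {g : ℝ → ℝ} {T K : ℝ} (hT : 0 < T)
    (hbase : ∀ t ∈ Ico T (2 * T), g t ≤ K) (hstep : ∀ t, T ≤ t → g (2 * t) ≤ g t) :
    ∀ t, T ≤ t → g t ≤ K := by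
  have key : ∀ n : ℕ, ∀ t, T ≤ t → t < 2 ^ n * T → g t ≤ K := by
    intro n
    induction n with
    | zero => intro t ht ht'; rw [pow_zero, one_mul] at ht'; linarith
    | succ n ih =>
      intro t ht ht'
      rcases lt_or_ge t (2 * T) with h | h
      · exact hbase t ⟨ht, h⟩
      · have := hstep (t / 2) (by linarith)
        rw [mul_div_cancel₀ t two_ne_zero] at this
        exact this.trans (ih _ (by linarith) (by rw [pow_succ] at ht'; linarith))
  intro t ht
  obtain ⟨n, hn⟩ := pow_unbounded_of_one_lt (t / T) one_lt_two
  exact key n t ht (by rwa [div_lt_iff₀ hT] at hn)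

lemma isBigO_rpow_neg_of_tendsto_div {S l : ℝ → ℝ} {α β B : ℝ} (hβ : 0 ≤ β) (hβα : β < α)
    (hl : ∀ t, 0 < t → 0 < l t) (hl2 : Tendsto (fun t => l (2 * t) / l t) atTop (𝓝 1))
    (hS : ∀ t, 0 < t → S t = l t * t ^ (-α)) (hSB : ∀ t, S t ≤ B) :
    S =O[atTop] fun t => t ^ (-β) := by
  have hSpos : ∀ t, 0 < t → 0 < S t := fun t ht => by
    rw [hS t ht]; exact mul_pos (hl t ht) (by positivity)
  obtain ⟨T₀, hT₀⟩ := eventually_atTop.1 <| hl2.eventually_le_const <|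
    Real.one_lt_rpow one_lt_two (sub_pos.2 hβα)
  set T := max T₀ 1
  have hT : 0 < T := lt_max_of_lt_right one_pos
  have hB : 0 ≤ B := (hSpos 1 one_pos).le.trans (hSB 1)
  -- `t ^ β * S t` does not grow under `t ↦ 2 * t` once `l (2 * t) / l t ≤ 2 ^ (α - β)`.
  have hbound := le_of_map_two_mul_le (g := fun t => t ^ β * S t) (K := (2 * T) ^ β * B) hT
    (fun t ht => by
      have ht0 : 0 < t := hT.trans_le ht.1
      calc t ^ β * S t ≤ t ^ β * B := by gcongr; exact hSB t
        _ ≤ (2 * T) ^ β * B := by gcongr; exact ht.2.le)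
    (fun t ht => by
      have ht0 : 0 < t := hT.trans_le ht
      have hratio := hT₀ t ((le_max_left _ _).trans ht)
      rw [div_le_iff₀ (hl t ht0)] at hratio
      have hpow : (2 : ℝ) ^ β * 2 ^ (-α) * 2 ^ (α - β) = 1 := by
        rw [← Real.rpow_add two_pos, ← Real.rpow_add two_pos,
          show β + -α + (α - β) = 0 by ring, Real.rpow_zero]
      simp only [hS t ht0, hS (2 * t) (by positivity), Real.mul_rpow two_pos.le ht0.le]
      calc 2 ^ β * t ^ β * (l (2 * t) * (2 ^ (-α) * t ^ (-α)))
          = 2 ^ β * 2 ^ (-α) * l (2 * t) * (t ^ β * t ^ (-α)) := by ring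
        _ ≤ 2 ^ β * 2 ^ (-α) * (2 ^ (α - β) * l t) * (t ^ β * t ^ (-α)) := by gcongr
        _ = t ^ β * (l t * t ^ (-α)) := by rw [← mul_assoc _ _ (l t), hpow]; ring)
  refine IsBigO.of_bound ((2 * T) ^ β * B) ?_
  filter_upwards [eventually_ge_atTop T] with t ht
  have ht0 : 0 < t := hT.trans_le ht
  rw [Real.norm_of_nonneg (hSpos t ht0).le, Real.norm_of_nonneg (by positivity),
    Real.rpow_neg ht0.le, ← div_eq_mul_inv, le_div_iff₀ (by positivity), mul_comm]
  exact hbound t ht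

lemma Monotone.sub_le_of_lipschitzWith {L : ℝ → ℝ} {K : NNReal} (hmono : Monotone L)
    (hlip : LipschitzWith K L) {x y d : ℝ} (hxy : x - y ≤ d) (hd : 0 ≤ d) :
    L x - L y ≤ K * d := by
  rcases le_total x y with h | h
  · linarith [hmono h, mul_nonneg K.coe_nonneg hd]
  · calc L x - L y ≤ |L x - L y| := le_abs_self _
      _ ≤ K * |x - y| := by simpa only [Real.dist_eq] using hlip.dist_le_mul x y
      _ ≤ K * d := by rw [abs_of_nonneg (sub_nonneg.2 h)]; gcongr

lemma exists_mem_nhds_mul_sub_le_sub_of_lt_deriv {F : ℝ → ℝ} (hF : ContDiff ℝ 1 F) {x c : ℝ}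
    (hc : c < deriv F x) :
    ∃ U ∈ 𝓝 x, ∀ u ∈ U, ∀ v ∈ U, u ≤ v → c * (v - u) ≤ F v - F u := by
  obtain ⟨ε, hε, hball⟩ := Metric.eventually_nhds_iff_ball.1 <|
    (hF.continuous_deriv le_rfl).continuousAt.eventually (lt_mem_nhds hc)
  have hdiff := hF.differentiable one_ne_zero
  refine ⟨Metric.ball x ε, Metric.ball_mem_nhds x hε, ?_⟩
  refine (convex_ball x ε).mul_sub_le_image_sub_of_le_deriv hdiff.continuous.continuousOn
    hdiff.differentiableOn fun y hy => ?_
  rw [interior_eq_iff_isOpen.2 Metric.isOpen_ball] at hy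
  exact (hball y hy).le

section CappedContract

variable {Ω : Type*} [MeasurableSpace Ω] {μ : Measure Ω} {Y : Ω → ℝ}

lemma survival_antitone [IsFiniteMeasure μ] : Antitone (survival μ Y) := fun _ _ h =>
  measureReal_mono fun _ hω => lt_of_le_of_lt h hω

lemma integrable_of_integrableOn_survival [IsFiniteMeasure μ] (hY : Measurable Y)
    (hY0 : 0 ≤ᵐ[μ] Y) (hS : IntegrableOn (survival μ Y) (Ioi 0)) : Integrable Y μ := by
  refine ⟨hY.aestronglyMeasurable, (hasFiniteIntegral_iff_ofReal hY0).2 ?_⟩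
  rw [lintegral_eq_lintegral_meas_lt μ hY0 hY.aemeasurable]
  convert hS.lintegral_lt_top using 3 with t
  rw [survival, ENNReal.ofReal_toReal (measure_ne_top _ _)]

lemma integrable_min_const [IsFiniteMeasure μ] (hY : Measurable Y) (hY0 : 0 ≤ᵐ[μ] Y) {s : ℝ}
    (hs : 0 ≤ s) : Integrable (fun ω => min (Y ω) s) μ :=
  .of_bound (hY.min measurable_const).aestronglyMeasurable s <| hY0.mono fun ω hω => by
    rw [Real.norm_of_nonneg (le_min hω hs)]; exact min_le_right _ _

lemma cappedPremium_eq_integral_min [IsFiniteMeasure μ] (hY : Measurable Y) (hY0 : 0 ≤ᵐ[μ] Y)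
    {s : ℝ} (hs : 0 ≤ s) : cappedPremium μ Y s = ∫ ω, min (Y ω) s ∂μ := by
  rw [(integrable_min_const hY hY0 hs).integral_eq_integral_meas_lt
    (hY0.mono fun ω hω => le_min hω hs), cappedPremium, integral_Ioc_eq_integral_Ioo,
    setIntegral_eq_of_subset_of_forall_sdiff_eq_zero measurableSet_Ioi Ioo_subset_Ioi_self]
  · refine setIntegral_congr_fun measurableSet_Ioo fun t ht => ?_
    simp only [survival, Measure.real, lt_min_iff, ht.2, and_true]
  · intro t ht
    have : ∀ ω, ¬ t < min (Y ω) s := fun ω h => ht.2 ⟨ht.1, (lt_min_iff.1 h).2⟩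
    simp only [this, ofPred_false, measureReal_empty]

lemma tendsto_cappedPremium_atTop [IsFiniteMeasure μ] (hY : Measurable Y) (hY0 : 0 ≤ᵐ[μ] Y)
    (hint : Integrable Y μ) :
    Tendsto (cappedPremium μ Y) atTop (𝓝 (∫ ω, Y ω ∂μ)) := by
  refine (tendsto_integral_filter_of_dominated_convergence (F := fun s ω => min (Y ω) s) Y
    (Eventually.of_forall fun s => (hY.min measurable_const).aestronglyMeasurable)
    ?_ hint (Eventually.of_forall fun ω => tendsto_const_nhds.congr' ?_)).congr' ?_
  · filter_upwards [eventually_ge_atTop 0] with s hs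
    filter_upwards [hY0] with ω hω
    rw [Real.norm_of_nonneg (le_min hω hs)]; exact min_le_left _ _
  · filter_upwards [eventually_ge_atTop (Y ω)] with s hs using (min_eq_left hs).symm
  · filter_upwards [eventually_ge_atTop 0] with s hs
    exact (cappedPremium_eq_integral_min hY hY0 hs).symm

lemma cappedPremium_strictMonoOn [IsFiniteMeasure μ]
    (hS : ∀ t, 0 < t → 0 < survival μ Y t) : StrictMonoOn (cappedPremium μ Y) (Ici 0) := by
  intro a ha b hb hab
  have hint : ∀ c d, IntervalIntegrable (survival μ Y) volume c d := fun _ _ =>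
    survival_antitone.intervalIntegrable
  rw [← sub_pos, cappedPremium, cappedPremium, ← intervalIntegral.integral_of_le hb,
    ← intervalIntegral.integral_of_le ha, intervalIntegral.integral_interval_sub_left (hint _ _)
    (hint _ _)]
  exact intervalIntegral.intervalIntegral_pos_of_pos_on (hint _ _)
    (fun t ht => hS t (lt_of_le_of_lt ha ht.1)) hab

lemma tendsto_measureReal_le_atTop [IsFiniteMeasure μ] :
    Tendsto (fun s => μ.real {ω | Y ω ≤ s}) atTop (𝓝 (μ.real univ)) := by
  have hunion : ⋃ s : ℝ, {ω | Y ω ≤ s} = univ :=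
    iUnion_eq_univ_iff.2 fun ω => ⟨Y ω, show Y ω ≤ Y ω from le_rfl⟩
  have := tendsto_measure_iUnion_atTop (μ := μ) (s := fun s : ℝ => {ω | Y ω ≤ s})
    fun s t hst ω (hω : Y ω ≤ s) => hω.trans hst
  rw [hunion] at this
  exact (ENNReal.tendsto_toReal (measure_ne_top _ _)).comp this

lemma cappedObjective_sub_le [IsProbabilityMeasure μ] (hY : Measurable Y)
    (hY0 : ∀ᵐ ω ∂μ, 0 < Y ω) {L f : ℝ → ℝ} {K : NNReal} (hLmono : Monotone L) (hLlip : LipschitzWith K L)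
    (hLbdd : ∃ M, ∀ x, |L x| ≤ M) {s₁ s₂ : ℝ} (hs₁ : 0 < s₁) (h12 : s₁ ≤ s₂)
    (hc : f (cappedPremium μ Y s₁) ≤ f (cappedPremium μ Y s₂)) :
    cappedObjective μ Y L f s₂ - cappedObjective μ Y L f s₁ ≤
      (L (1 - f (cappedPremium μ Y s₂)) - L (1 - f (cappedPremium μ Y s₁)))
          * μ.real {ω | Y ω ≤ s₁}
        + K / s₁ * (cappedPremium μ Y s₂ - cappedPremium μ Y s₁) := by
  obtain ⟨M, hM⟩ := hLbdd
  have hY0' : 0 ≤ᵐ[μ] Y := hY0.mono fun _ h => h.le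
  set c₁ := f (cappedPremium μ Y s₁)
  set c₂ := f (cappedPremium μ Y s₂)
  have hint : ∀ s c, Integrable (fun ω => L (min (Y ω) s / Y ω - c)) μ := fun s c =>
    .of_bound (hLlip.continuous.measurable.comp
      (((hY.min measurable_const).div hY).sub measurable_const)).aestronglyMeasurable M
      (.of_forall fun ω => hM _)
  have hmin := fun s (hs : s₁ ≤ s) => integrable_min_const hY hY0' (hs₁.le.trans hs)
  have hE : MeasurableSet {ω | Y ω ≤ s₁} := measurableSet_le hY measurable_const
  have hind : Integrable ({ω | Y ω ≤ s₁}.indicator fun _ => L (1 - c₂) - L (1 - c₁)) μ :=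
    (integrable_const _).indicator hE
  have hdiff : Integrable (fun ω => K / s₁ * (min (Y ω) s₂ - min (Y ω) s₁)) μ :=
    ((hmin _ h12).sub (hmin _ le_rfl)).const_mul _
  have hpoint : ∀ᵐ ω ∂μ, L (min (Y ω) s₂ / Y ω - c₂) - L (min (Y ω) s₁ / Y ω - c₁) ≤
      {ω | Y ω ≤ s₁}.indicator (fun _ => L (1 - c₂) - L (1 - c₁)) ω
        + K / s₁ * (min (Y ω) s₂ - min (Y ω) s₁) := by
    filter_upwards [hY0] with ω hω
    rcases le_or_gt (Y ω) s₁ with h | h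
    · rw [indicator_of_mem (show ω ∈ {ω | Y ω ≤ s₁} from h), min_eq_left h,
        min_eq_left (h.trans h12), div_self hω.ne']
      simp
    · rw [indicator_of_notMem (show ω ∉ {ω | Y ω ≤ s₁} from not_le.2 h), zero_add,
        min_eq_right h.le]
      have hgap : 0 ≤ min (Y ω) s₂ - s₁ := sub_nonneg.2 (le_min h.le h12)
      calc _ ≤ K * ((min (Y ω) s₂ - s₁) / s₁) := by
            refine hLmono.sub_le_of_lipschitzWith hLlip ?_ (div_nonneg hgap hs₁.le)
            calc min (Y ω) s₂ / Y ω - c₂ - (s₁ / Y ω - c₁)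
                ≤ (min (Y ω) s₂ - s₁) / Y ω := by rw [sub_div]; linarith
              _ ≤ (min (Y ω) s₂ - s₁) / s₁ := div_le_div_of_nonneg_left hgap hs₁ h.le
        _ = _ := by ring
  calc cappedObjective μ Y L f s₂ - cappedObjective μ Y L f s₁
      = ∫ ω, (L (min (Y ω) s₂ / Y ω - c₂) - L (min (Y ω) s₁ / Y ω - c₁)) ∂μ :=
        (integral_sub (hint _ _) (hint _ _)).symm
    _ ≤ ∫ ω, ({ω | Y ω ≤ s₁}.indicator (fun _ => L (1 - c₂) - L (1 - c₁)) ω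
          + K / s₁ * (min (Y ω) s₂ - min (Y ω) s₁)) ∂μ :=
        integral_mono_ae ((hint _ _).sub (hint _ _)) (hind.add hdiff) hpoint
    _ = _ := by
      rw [integral_add hind hdiff, integral_indicator_const _ hE,
        integral_const_mul, integral_sub (hmin _ h12) (hmin _ le_rfl),
        cappedPremium_eq_integral_min hY hY0' hs₁.le,
        cappedPremium_eq_integral_min hY hY0' (hs₁.le.trans h12), smul_eq_mul, mul_comm]

theorem exists_strictAntiOn_cappedObjective [IsProbabilityMeasure μ] (hY : Measurable Y)
    (hY0 : ∀ᵐ ω ∂μ, 0 < Y ω) (hYint : Integrable Y μ) (hS : ∀ t, 0 < t → 0 < survival μ Y t)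
    {L f : ℝ → ℝ} (hL : ContDiff ℝ 1 L) (hLmono : Monotone L)
    (hLbdd : ∃ M, ∀ x, |L x| ≤ M) (hL'bdd : ∃ M, ∀ x, |deriv L x| ≤ M)
    (hf : ContDiff ℝ 1 f) (hf' : 0 < deriv f (∫ ω, Y ω ∂μ))
    (hL' : 0 < deriv L (1 - f (∫ ω, Y ω ∂μ))) :
    ∃ s₀ > (0 : ℝ), StrictAntiOn (cappedObjective μ Y L f) (Ici s₀) := by
  obtain ⟨U, hU, hfU⟩ := exists_mem_nhds_mul_sub_le_sub_of_lt_deriv hf (half_lt_self hf')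
  obtain ⟨V, hV, hLV⟩ := exists_mem_nhds_mul_sub_le_sub_of_lt_deriv hL (half_lt_self hL')
  set m := ∫ ω, Y ω ∂μ
  set a := deriv f m / 2
  set b := deriv L (1 - f m) / 2
  have ha : 0 < a := half_pos hf'
  have hb : 0 < b := half_pos hL'
  obtain ⟨K, hK⟩ : ∃ K : NNReal, LipschitzWith K L := by
    obtain ⟨M, hM⟩ := hL'bdd
    refine ⟨M.toNNReal,
      lipschitzWith_of_nnnorm_deriv_le (hL.differentiable one_ne_zero) fun x => ?_⟩
    rw [← NNReal.coe_le_coe, coe_nnnorm, Real.norm_eq_abs]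
    exact (hM x).trans (Real.le_coe_toNNReal M)
  have hπ := tendsto_cappedPremium_atTop hY (hY0.mono fun _ h => h.le) hYint
  have hev : ∀ᶠ s in atTop, cappedPremium μ Y s ∈ U ∧ 1 - f (cappedPremium μ Y s) ∈ V ∧
      1 / 2 < μ.real {ω | Y ω ≤ s} ∧ K / s < a * b / 2 ∧ 0 < s :=
    (hπ.eventually hU).and <|
      ((tendsto_const_nhds.sub ((hf.continuous.tendsto m).comp hπ)).eventually hV).and <|
      (tendsto_measureReal_le_atTop.eventually (lt_mem_nhds (by norm_num))).and <|
      ((tendsto_const_nhds.div_atTop tendsto_id).eventually (gt_mem_nhds (by positivity))).and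
      (eventually_gt_atTop 0)
  obtain ⟨s₀, hs₀⟩ := eventually_atTop.1 hev
  refine ⟨max s₀ 1, by positivity, fun s₁ hs₁ s₂ hs₂ h12 => ?_⟩
  obtain ⟨hU₁, hV₁, hq, hKs, hs₁0⟩ := hs₀ s₁ ((le_max_left _ _).trans hs₁)
  obtain ⟨hU₂, hV₂, -⟩ := hs₀ s₂ ((le_max_left _ _).trans hs₂)
  have hΔ : 0 < cappedPremium μ Y s₂ - cappedPremium μ Y s₁ := sub_pos.2 <|
    cappedPremium_strictMonoOn hS (mem_Ici.2 hs₁0.le) (mem_Ici.2 (hs₁0.trans h12).le) h12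
  have hΔf := hfU _ hU₁ _ hU₂ (sub_pos.1 hΔ).le
  have hc : f (cappedPremium μ Y s₁) ≤ f (cappedPremium μ Y s₂) := by
    linarith [mul_pos ha hΔ]
  have hΔL := hLV _ hV₂ _ hV₁ (by linarith)
  have hobj := cappedObjective_sub_le hY hY0 hLmono hK hLbdd hs₁0 h12.le hc
  have hLneg : L (1 - f (cappedPremium μ Y s₂)) - L (1 - f (cappedPremium μ Y s₁)) ≤ 0 := by
    linarith [mul_nonneg hb.le (sub_nonneg.2 hc)]
  linarith [mul_le_mul_of_nonneg_left hΔf hb.le, mul_lt_mul_of_pos_right hKs hΔ,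
    mul_nonneg (neg_nonneg.2 hLneg) (sub_nonneg.2 hq.le)]

end CappedContract

theorem statement8_general {Ω : Type*} [MeasurableSpace Ω]
    (μ : Measure Ω) [IsProbabilityMeasure μ]
    (Y : Ω → ℝ) (hY : Measurable Y)
    (p : ℝ → ℝ)
    (hdens : μ.map Y
      = (volume.restrict (Ioi (0:ℝ))).withDensity (fun t => ENNReal.ofReal (p t)))
    (γ : ℝ) (hγ : γ ∈ Ioo (0:ℝ) 1)
    (l : ℝ → ℝ) (hlpos : ∀ t, 0 < t → 0 < l t)
    (hsv : ∀ h : ℝ, 0 < h → Tendsto (fun t => l (h * t) / l t) atTop (nhds 1))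
    (hSform : ∀ t, 0 < t → survival μ Y t = l t * t ^ (-(1 / γ)))
    (L : ℝ → ℝ) (hL : ContDiff ℝ 1 L) (hLmono : Monotone L)
    (hLbdd : ∃ M, ∀ x, |L x| ≤ M) (hL'bdd : ∃ M, ∀ x, |deriv L x| ≤ M)
    (f : ℝ → ℝ) (hf : ContDiff ℝ 1 f)
    (hf' : deriv f (∫ ω, Y ω ∂μ) > 0)
    (hL' : deriv L (1 - f (∫ ω, Y ω ∂μ)) > 0) :
    ∃ s₀ > (0:ℝ), StrictAntiOn (cappedObjective μ Y L f) (Ici s₀) := by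
  have hY0 : ∀ᵐ ω ∂μ, 0 < Y ω := ae_of_ae_map hY.aemeasurable <| hdens ▸
    (withDensity_absolutelyContinuous _ _).ae_le (ae_restrict_mem measurableSet_Ioi)
  have hinv : 1 < 1 / γ := (one_lt_div hγ.1).2 hγ.2
  have hO := isBigO_rpow_neg_of_tendsto_div (β := (1 / γ + 1) / 2) (by positivity) (by linarith)
    hlpos (hsv 2 two_pos) hSform fun _ => measureReal_le_one
  have hSint : IntegrableOn (survival μ Y) (Ioi 0) :=
    ((survival_antitone.locallyIntegrable.locallyIntegrableOn (Ici 0)).integrableOn_of_isBigO_atTop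
      hO (integrableAtFilter_rpow_atTop_iff.2 (by linarith))).mono_set Ioi_subset_Ici_self
  have hSpos : ∀ t, 0 < t → 0 < survival μ Y t := fun t ht => by
    rw [hSform t ht]; exact mul_pos (hlpos t ht) (by positivity)
  exact exists_strictAntiOn_cappedObjective hY hY0
    (integrable_of_integrableOn_survival hY (hY0.mono fun _ h => h.le) hSint) hSpos
    hL hLmono hLbdd hL'bdd hf hf' hL'

/-- eventual suboptimality of increasing the limit when the mean is
finite: if `S_Y(t) = l(t)·t^{−1/γ}` with `γ ∈ (0, 1)` and `l` slowly varying (so that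
`π⁺ = E[Y] < ∞`), and `f′(π⁺) > 0`, `L′(1 − f(π⁺)) > 0`, then the objective `𝔏` is
strictly decreasing on some half-line `[s₀, ∞)`. -/
theorem statement8 {Ω : Type*} [MeasurableSpace Ω]
    (μ : Measure Ω) [IsProbabilityMeasure μ]
    (Y : Ω → ℝ) (hY : Measurable Y)
    (p : ℝ → ℝ) (hpcont : ContinuousOn p (Ioi 0)) (hpnn : ∀ t, 0 ≤ p t)
    (hdens : μ.map Y
      = (volume.restrict (Ioi (0:ℝ))).withDensity (fun t => ENNReal.ofReal (p t)))
    (γ : ℝ) (hγ : γ ∈ Ioo (0:ℝ) 1)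
    (l : ℝ → ℝ) (hlpos : ∀ t, 0 < t → 0 < l t)
    (hsv : ∀ h : ℝ, 0 < h → Tendsto (fun t => l (h * t) / l t) atTop (nhds 1))
    (hSform : ∀ t, 0 < t → survival μ Y t = l t * t ^ (-(1 / γ)))
    (L : ℝ → ℝ) (hL : ContDiff ℝ 1 L) (hLmono : Monotone L)
    (hLbdd : ∃ M, ∀ x, |L x| ≤ M) (hL'bdd : ∃ M, ∀ x, |deriv L x| ≤ M)
    (f : ℝ → ℝ) (hf : ContDiff ℝ 1 f) (hfmono : Monotone f)
    (hf' : deriv f (∫ ω, Y ω ∂μ) > 0)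
    (hL' : deriv L (1 - f (∫ ω, Y ω ∂μ)) > 0) :
    ∃ s₀ > (0:ℝ), StrictAntiOn (cappedObjective μ Y L f) (Ici s₀) :=
  statement8_general μ Y hY p hdens γ hγ l hlpos hsv hSform L hL hLmono hLbdd hL'bdd f hf hf' hL'
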